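/- Let x ∈ X with M₁(x) > 0, κ ∈ ℝ, let γ : ℝ → [0,∞) be convex on ℝ with its restriction to [0,∞) a CD-function, and let α : X → (0,∞) be such that Ψ_{2,Υ}(f)(x) ≥ κ·Ψ_Υ(f)(x) + α(x)·∑_{y} k(x,y)·γ(f(x)−f(y)) holds for every bounded f : X → ℝ. Then L satisfies CD_Υ(κ,F) at x with F(r) = α(x)·M₁(x)·γ(r/M₁(x)) for r ≥ 0. If moreover 0 < inf_x M₁(x) ≤ sup_x M₁(x) < ∞, α_* := inf_x α(x) > 0, and the displayed inequality holds for all bounded f and all x ∈ X, then L satisfies CD_Υ(κ,F) with F(r) = α_*·(inf_x M₁(x))·γ( r / sup_x M₁(x) ) for r ≥ 0. -/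

import Mathlib

open Real Filter MeasureTheory Set

/-- `Υ(r) = e^r - r - 1`. -/
noncomputable def Ups (r : ℝ) : ℝ := Real.exp r - r - 1

/-- `M₁(x) = ∑_{y ≠ x} k(x,y)`. -/
noncomputable def M1fn {X : Type*} (k : X → X → ℝ) (x : X) : ℝ :=
  ∑' y : {y : X // y ≠ x}, k x y

/-- The Markov generator `L f(x) = ∑_y k(x,y)(f(y) - f(x))`. -/
noncomputable def genOp {X : Type*} (k : X → X → ℝ) (f : X → ℝ) (x : X) : ℝ :=
  ∑' y, k x y * (f y - f x)

/-- `Ψ_Υ(f)(x) = ∑_y k(x,y) Υ(f(y) - f(x))`. -/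
noncomputable def psiUps {X : Type*} (k : X → X → ℝ) (f : X → ℝ) (x : X) : ℝ :=
  ∑' y, k x y * Ups (f y - f x)

/-- `B_{Υ'}(f,g)(x) = ∑_y k(x,y) Υ'(f(y)-f(x)) (g(y)-g(x))`. -/
noncomputable def bUps {X : Type*} (k : X → X → ℝ) (f g : X → ℝ) (x : X) : ℝ :=
  ∑' y, k x y * (Real.exp (f y - f x) - 1) * (g y - g x)

/-- `Ψ_{2,Υ}(f) = (1/2)(L Ψ_Υ(f) - B_{Υ'}(f, L f))`. -/
noncomputable def psi2Ups {X : Type*} (k : X → X → ℝ) (f : X → ℝ) (x : X) : ℝ :=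
  (1/2) * (genOp k (psiUps k f) x - bUps k f (genOp k f) x)

/-- Boundedness of a real-valued function on the state space. -/
def BddFun {X : Type*} (f : X → ℝ) : Prop := ∃ B : ℝ, ∀ x, |f x| ≤ B

/-- The standing assumptions on the transition rates: nonnegative off-diagonal rates,
`M₁(x) < ∞` (summability), `k(x,x) = -M₁(x)`, and `M₂(x) < ∞`. -/
def KernelSetting {X : Type*} (k : X → X → ℝ) : Prop :=
  (∀ x y, x ≠ y → 0 ≤ k x y) ∧
  (∀ x : X, Summable fun y : {y : X // y ≠ x} => k x y) ∧
  (∀ x : X, k x x = -M1fn k x) ∧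
  (∀ x : X, Summable fun y : {y : X // y ≠ x} => k x y * M1fn k y)

/-- A CD-function: continuous and nonnegative on `[0,∞)` with `F(0) = 0`, `F(r)/r`
strictly increasing on `(0,∞)` and `1/F` integrable at `∞`. -/
def IsCDFunction (F : ℝ → ℝ) : Prop :=
  ContinuousOn F (Ici 0) ∧ F 0 = 0 ∧ (∀ r : ℝ, 0 ≤ r → 0 ≤ F r) ∧
  StrictMonoOn (fun r => F r / r) (Ioi 0) ∧
  ∃ c : ℝ, 0 < c ∧ IntegrableOn (fun r => 1 / F r) (Ioi c)

/-- The trivial extension `F₀` of `F : [0,∞) → [0,∞)` by `0` on `(-∞,0)`. -/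
noncomputable def trivExt (F : ℝ → ℝ) : ℝ → ℝ := fun r => if 0 ≤ r then F r else 0

/-- The condition `CD_Υ(κ,F)` at a point `x`. -/
def CDUpsAt {X : Type*} (k : X → X → ℝ) (κ : ℝ) (F : ℝ → ℝ) (x : X) : Prop :=
  ∀ f : X → ℝ, BddFun f →
    κ * psiUps k f x + trivExt F (-genOp k f x) ≤ psi2Ups k f x

/-- The condition `CD_Υ(κ,F)` (at every point). -/
def CDUps {X : Type*} (k : X → X → ℝ) (κ : ℝ) (F : ℝ → ℝ) : Prop :=
  ∀ x : X, CDUpsAt k κ F x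

/-
The dimension term is an average: with weights `k(x,y)`, `y ≠ x`, of total mass `M₁(x)`, the
points `f(x) - f(y)` have barycentre `-L f(x) / M₁(x)`. Jensen's inequality for the convex `γ`
therefore gives `∑_y k(x,y) γ(f(x) - f(y)) ≥ M₁(x) γ(-L f(x) / M₁(x))`, which is the pointwise
claim. The global one follows because a CD-function is nondecreasing on `[0,∞)`, so the
function `F` may be lowered by replacing `α(x)`, `M₁(x)` by their infima and the argument
`r / M₁(x)` by `r / sup M₁`.
-/

theorem ConvexOn.exists_le_affine_of_mem_interior {S : Set ℝ} {γ : ℝ → ℝ}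
    (hγ : ConvexOn ℝ S γ) {m : ℝ} (hm : m ∈ interior S) :
    ∃ c : ℝ, ∀ t ∈ S, γ m + c * (t - m) ≤ γ t := by
  refine ⟨derivWithin γ (Ioi m) m, fun t ht => ?_⟩
  rcases lt_trichotomy t m with htm | rfl | hmt
  · have hslope : slope γ t m ≤ derivWithin γ (Ioi m) m :=
      (hγ.slope_le_leftDeriv_of_mem_interior ht hm htm).trans
        (hγ.leftDeriv_le_rightDeriv_of_mem_interior hm)
    rw [slope_def_field, div_le_iff₀ (sub_pos.mpr htm)] at hslope
    linarith
  · simp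
  · have hslope : derivWithin γ (Ioi m) m ≤ slope γ m t :=
      hγ.rightDeriv_le_slope_of_mem_interior hm ht hmt
    rw [slope_def_field, le_div_iff₀ (sub_pos.mpr hmt)] at hslope
    linarith

theorem ConvexOn.mul_map_tsum_div_le {ι : Type*} {γ : ℝ → ℝ} (hγ : ConvexOn ℝ univ γ)
    {w t : ι → ℝ} (hw : ∀ i, 0 ≤ w i) (hW : 0 < ∑' i, w i) (hws : Summable w)
    (hwt : Summable fun i => w i * t i) (hwγ : Summable fun i => w i * γ (t i)) :
    (∑' i, w i) * γ ((∑' i, w i * t i) / ∑' i, w i) ≤ ∑' i, w i * γ (t i) := by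
  set m := (∑' i, w i * t i) / ∑' i, w i
  obtain ⟨c, hc⟩ := hγ.exists_le_affine_of_mem_interior (m := m) (by simp)
  have hsupport : ∀ i, w i * (γ m - c * m) + c * (w i * t i) ≤ w i * γ (t i) := fun i => by
    linarith [mul_le_mul_of_nonneg_left (hc (t i) (mem_univ _)) (hw i)]
  have hsum := Summable.tsum_le_tsum hsupport
    ((hws.mul_right _).add (hwt.mul_left c)) hwγ
  rw [Summable.tsum_add (hws.mul_right _) (hwt.mul_left c), tsum_mul_right, tsum_mul_left]
    at hsum
  have hmW : m * ∑' i, w i = ∑' i, w i * t i := div_mul_cancel₀ _ hW.ne'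
  linear_combination hsum + c * hmW

theorem ConvexOn.le_max_of_abs_le {γ : ℝ → ℝ} (hγ : ConvexOn ℝ univ γ) {R t : ℝ}
    (ht : |t| ≤ R) : γ t ≤ max (γ (-R)) (γ R) :=
  hγ.le_on_segment (mem_univ _) (mem_univ _) <| by
    rw [segment_eq_Icc (by linarith [abs_nonneg t])]
    exact abs_le.mp ht

theorem IsCDFunction.monotoneOn {F : ℝ → ℝ} (hF : IsCDFunction F) : MonotoneOn F (Ici 0) := by
  obtain ⟨-, hF0, hFnonneg, hFslope, -⟩ := hF
  intro a ha b hb hab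
  rcases (mem_Ici.mp ha).eq_or_lt with rfl | ha_pos
  · exact hF0.le.trans (hFnonneg b hb)
  rcases hab.eq_or_lt with rfl | hab
  · rfl
  have hb_pos := ha_pos.trans hab
  have hquot : F a / a ≤ F b / b := (hFslope ha_pos hb_pos hab).le
  calc F a = F a / a * a := (div_mul_cancel₀ _ ha_pos.ne').symm
    _ ≤ F b / b * b := mul_le_mul hquot hab.le ha_pos.le (div_nonneg (hFnonneg b hb) hb_pos.le)
    _ = F b := div_mul_cancel₀ _ hb_pos.ne'

theorem BddFun.abs_sub_le {X : Type*} {f : X → ℝ} (hf : BddFun f) :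
    ∃ R, ∀ x y, |f x - f y| ≤ R := by
  obtain ⟨B, hB⟩ := hf
  exact ⟨2 * B, fun x y => (abs_sub _ _).trans (by linarith [hB x, hB y])⟩

theorem genOp_eq_tsum_ne {X : Type*} (k : X → X → ℝ) (f : X → ℝ) (x : X) :
    genOp k f x = ∑' y : {y : X // y ≠ x}, k x y * (f y - f x) :=
  (tsum_subtype_eq_of_support_subset (s := {y | y ≠ x}) fun y hy hyx => hy (by simp [hyx])).symm

theorem trivExt_mono {F G : ℝ → ℝ} (hFG : ∀ r, 0 ≤ r → F r ≤ G r) (r : ℝ) :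
    trivExt F r ≤ trivExt G r := by
  unfold trivExt
  split_ifs with hr
  exacts [hFG r hr, le_rfl]

theorem CDUpsAt.mono {X : Type*} {k : X → X → ℝ} {κ : ℝ} {F G : ℝ → ℝ} {x : X}
    (hG : CDUpsAt k κ G x) (hFG : ∀ r, 0 ≤ r → F r ≤ G r) : CDUpsAt k κ F x :=
  fun f hf => (add_le_add le_rfl (trivExt_mono hFG _)).trans (hG f hf)

namespace KernelSetting

variable {X : Type*} {k : X → X → ℝ}

theorem rate_nonneg (hk : KernelSetting k) (x : X) (y : {y : X // y ≠ x}) : 0 ≤ k x y :=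
  hk.1 x y (Ne.symm y.2)

theorem summable_rates (hk : KernelSetting k) (x : X) :
    Summable fun y : {y : X // y ≠ x} => k x y :=
  hk.2.1 x

theorem summable_mul_of_abs_le (hk : KernelSetting k) (x : X) {g : {y : X // y ≠ x} → ℝ}
    {C : ℝ} (hg : ∀ y, |g y| ≤ C) : Summable fun y : {y : X // y ≠ x} => k x y * g y :=
  Summable.of_norm_bounded ((hk.summable_rates x).mul_right C) fun y => by
    rw [norm_mul, Real.norm_of_nonneg (hk.rate_nonneg x y)]
    exact mul_le_mul_of_nonneg_left (hg y) (hk.rate_nonneg x y)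

theorem mul_map_neg_genOp_div_le (hk : KernelSetting k) {γ : ℝ → ℝ}
    (hγ : ConvexOn ℝ univ γ) (hγnonneg : ∀ r, 0 ≤ γ r) {x : X} (hM : 0 < M1fn k x)
    {f : X → ℝ} (hf : BddFun f) :
    M1fn k x * γ (-genOp k f x / M1fn k x)
      ≤ ∑' y : {y : X // y ≠ x}, k x y * γ (f x - f y) := by
  obtain ⟨R, hR⟩ := hf.abs_sub_le
  have hbarycentre : ∑' y : {y : X // y ≠ x}, k x y * (f x - f y) = -genOp k f x := by
    simp only [genOp_eq_tsum_ne, ← tsum_neg, ← mul_neg, neg_sub]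
  rw [← hbarycentre]
  exact hγ.mul_map_tsum_div_le (hk.rate_nonneg x) hM (hk.summable_rates x)
    (hk.summable_mul_of_abs_le x fun y => hR x y)
    (hk.summable_mul_of_abs_le x fun y => by
      rw [abs_of_nonneg (hγnonneg _)]
      exact hγ.le_max_of_abs_le (hR x y))

theorem cdUpsAt_of_convex_bound (hk : KernelSetting k) {κ : ℝ} {γ : ℝ → ℝ}
    (hγ : ConvexOn ℝ univ γ) (hγnonneg : ∀ r, 0 ≤ γ r) {a : ℝ} (ha : 0 ≤ a) {x : X}
    (hM : 0 < M1fn k x)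
    (hbound : ∀ f : X → ℝ, BddFun f →
      κ * psiUps k f x + a * (∑' y : {y : X // y ≠ x}, k x y * γ (f x - f y))
        ≤ psi2Ups k f x) :
    CDUpsAt k κ (fun r => a * M1fn k x * γ (r / M1fn k x)) x := by
  intro f hf
  have hdim : trivExt (fun r => a * M1fn k x * γ (r / M1fn k x)) (-genOp k f x)
      ≤ a * ∑' y : {y : X // y ≠ x}, k x y * γ (f x - f y) := by
    unfold trivExt
    split_ifs
    · dsimp only
      rw [mul_assoc]
      exact mul_le_mul_of_nonneg_left (hk.mul_map_neg_genOp_div_le hγ hγnonneg hM hf) ha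
    · exact mul_nonneg ha (tsum_nonneg fun y => mul_nonneg (hk.rate_nonneg x y) (hγnonneg _))
  linarith [hbound f hf]

end KernelSetting

theorem stmt_8_general {X : Type*} (k : X → X → ℝ) (hk : KernelSetting k)
    (κ : ℝ) (γ : ℝ → ℝ) (hγconv : ConvexOn ℝ Set.univ γ) (hγnonneg : ∀ r : ℝ, 0 ≤ γ r)
    (hγCD : IsCDFunction γ) (α : X → ℝ) (hαpos : ∀ x, 0 < α x) :
    (∀ x : X, 0 < M1fn k x →
      (∀ f : X → ℝ, BddFun f →
        κ * psiUps k f x + α x * (∑' y : {y : X // y ≠ x}, k x y * γ (f x - f y))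
          ≤ psi2Ups k f x) →
      CDUpsAt k κ (fun r => α x * M1fn k x * γ (r / M1fn k x)) x)
    ∧ (∀ Minf Msup αstar : ℝ,
        IsGLB (Set.range (M1fn k)) Minf → IsLUB (Set.range (M1fn k)) Msup →
        IsGLB (Set.range α) αstar → 0 < Minf → 0 < αstar →
        (∀ (x : X) (f : X → ℝ), BddFun f →
          κ * psiUps k f x + α x * (∑' y : {y : X // y ≠ x}, k x y * γ (f x - f y))
            ≤ psi2Ups k f x) →
        CDUps k κ (fun r => αstar * Minf * γ (r / Msup))) := by
  refine ⟨fun x hM hbound => hk.cdUpsAt_of_convex_bound hγconv hγnonneg (hαpos x).le hM hbound,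
    fun Minf Msup αstar hMinf hMsup hαstar hMinf_pos _ hbound x => ?_⟩
  have hMinf_le : Minf ≤ M1fn k x := hMinf.1 (mem_range_self x)
  have hle_Msup : M1fn k x ≤ Msup := hMsup.1 (mem_range_self x)
  have hαstar_le : αstar ≤ α x := hαstar.1 (mem_range_self x)
  have hM : 0 < M1fn k x := hMinf_pos.trans_le hMinf_le
  refine (hk.cdUpsAt_of_convex_bound hγconv hγnonneg (hαpos x).le hM (hbound x)).mono
    fun r hr => ?_
  have hγ_le : γ (r / Msup) ≤ γ (r / M1fn k x) :=
    hγCD.monotoneOn (div_nonneg hr (hM.trans_le hle_Msup).le) (div_nonneg hr hM.le)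
      (div_le_div_of_nonneg_left hr hM hle_Msup)
  exact mul_le_mul (mul_le_mul hαstar_le hMinf_le hMinf_pos.le (hαpos x).le) hγ_le
    (hγnonneg _) (mul_nonneg (hαpos x).le hM.le)

/-- Proposition 2.7: a convex lower bound `γ` for the dimension term yields a
`CD_Υ(κ,F)` condition via Jensen's inequality, pointwise and globally. -/
theorem stmt_8 {X : Type*} [Countable X] (k : X → X → ℝ) (hk : KernelSetting k)
    (κ : ℝ) (γ : ℝ → ℝ) (hγconv : ConvexOn ℝ Set.univ γ) (hγnonneg : ∀ r : ℝ, 0 ≤ γ r)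
    (hγCD : IsCDFunction γ) (α : X → ℝ) (hαpos : ∀ x, 0 < α x) :
    (∀ x : X, 0 < M1fn k x →
      (∀ f : X → ℝ, BddFun f →
        κ * psiUps k f x + α x * (∑' y : {y : X // y ≠ x}, k x y * γ (f x - f y))
          ≤ psi2Ups k f x) →
      CDUpsAt k κ (fun r => α x * M1fn k x * γ (r / M1fn k x)) x)
    ∧ (∀ Minf Msup αstar : ℝ,
        IsGLB (Set.range (M1fn k)) Minf → IsLUB (Set.range (M1fn k)) Msup →
        IsGLB (Set.range α) αstar → 0 < Minf → 0 < αstar →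
        (∀ (x : X) (f : X → ℝ), BddFun f →
          κ * psiUps k f x + α x * (∑' y : {y : X // y ≠ x}, k x y * γ (f x - f y))
            ≤ psi2Ups k f x) →
        CDUps k κ (fun r => αstar * Minf * γ (r / Msup))) :=
  stmt_8_general k hk κ γ hγconv hγnonneg hγCD α hαpos
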